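/- Correctness of BiMPC with padding: under the hypotheses of the two-client BiMPC protocol with padding vectors p₁ˢ, p₂ˢ, pᵐ ∈ F_q^{n'}, defining s'' as the sum of all padded masked shares, m'' as the concatenation of (a ⊕ b) + k with pᵐ, k'₁ = Σᵢ k₁ˢᵢ + Σⱼ (p₁ˢⱼ - pᵐⱼ), and k'₂ = Σᵢ (k₂ˢᵢ - kᵢ) + Σⱼ p₂ˢⱼ, the master's output 2⁻¹·(Σᵢ s''ᵢ - Σᵢ m''ᵢ - k'₁ - k'₂) mod q equals the integer dot product a ⊙ b (as an element of F_q). -/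

import Mathlib

/-!
Encoding the XOR of bits as `a ⊕ b = a + b - 2ab`, the masks `k₁ˢ, k₂ˢ, k` and the paddings
cancel against `k'₁ + k'₂`, leaving `Σᵢ (aᵢ + bᵢ - (aᵢ ⊕ bᵢ)) = 2 (a ⊙ b)`. Since `q > 2n` is
prime, `2` is invertible in `F_q` as soon as `n > 0`.
-/

open Finset

theorem Fin.sum_append {M : Type*} [AddCommMonoid M] {m n : ℕ} (u : Fin m → M) (v : Fin n → M) :
    ∑ i, Fin.append u v i = ∑ i, u i + ∑ i, v i := by
  simp [Fin.sum_univ_add]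

theorem ZMod.two_ne_zero_of_two_lt {q : ℕ} (hq : 2 < q) : (2 : ZMod q) ≠ 0 := by
  intro h
  have hdvd : q ∣ 2 := (ZMod.natCast_eq_zero_iff 2 q).1 (by exact_mod_cast h)
  exact absurd (Nat.le_of_dvd two_pos hdvd) (by omega)

theorem padded_unmask_eq_two_mul_sum_mul {R : Type*} [CommRing R] {n n' : ℕ}
    (x y k₁ k₂ k : Fin n → R) (p₁ p₂ pm : Fin n' → R) :
    (∑ i, (Fin.append (fun i => x i + k₁ i) p₁ i + Fin.append (fun i => y i + k₂ i) p₂ i))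
        - ∑ i, Fin.append (fun i => x i + y i - 2 * x i * y i + k i) pm i
        - ((∑ i, k₁ i) + ∑ j, (p₁ j - pm j))
        - ((∑ i, (k₂ i - k i)) + ∑ j, p₂ j)
      = 2 * ∑ i, x i * y i := by
  simp only [sum_add_distrib, Fin.sum_append, sum_sub_distrib, mul_sum, ← mul_assoc]
  ring

theorem bimpc_correct_padded_general (n n' q : ℕ) (hq : q.Prime) (hlt : 2 * n < q)
    (a b : Fin n → ℤ)
    (k₁ k₂ k : Fin n → ZMod q) (p₁ p₂ pm : Fin n' → ZMod q) :
    (2 : ZMod q)⁻¹ *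
      ((∑ i : Fin (n + n'),
          (Fin.append (fun i => ((a i : ℤ) : ZMod q) + k₁ i) p₁ i
            + Fin.append (fun i => ((b i : ℤ) : ZMod q) + k₂ i) p₂ i))
        - (∑ i : Fin (n + n'),
            Fin.append (fun i => ((a i + b i - 2 * a i * b i : ℤ) : ZMod q) + k i) pm i)
        - ((∑ i, k₁ i) + ∑ j, (p₁ j - pm j))
        - ((∑ i, (k₂ i - k i)) + ∑ j, p₂ j))
      = (((∑ i, a i * b i : ℤ)) : ZMod q) := by
  push_cast
  rw [padded_unmask_eq_two_mul_sum_mul]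
  rcases n.eq_zero_or_pos with rfl | hn
  -- here `q = 2` is possible, so `2⁻¹ = 0`, but both sides are empty sums
  · simp
  · have : Fact q.Prime := ⟨hq⟩
    exact inv_mul_cancel_left₀ (ZMod.two_ne_zero_of_two_lt (by omega)) _

/-- Correctness of BiMPC with padding: the master's output
2⁻¹ (Σ s''ᵢ - Σ m''ᵢ - k'₁ - k'₂) equals the integer dot product a ⊙ b in F_q,
where s'' is the componentwise sum of the padded masked shares and m'' is the
concatenation of (a ⊕ b) + k with pᵐ. -/
theorem bimpc_correct_padded (n n' q : ℕ) (hq : q.Prime) (hlt : 2 * n < q)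
    (a b : Fin n → ℤ)
    (ha : ∀ i, a i = 0 ∨ a i = 1) (hb : ∀ i, b i = 0 ∨ b i = 1)
    (k₁ k₂ k : Fin n → ZMod q) (p₁ p₂ pm : Fin n' → ZMod q) :
    (2 : ZMod q)⁻¹ *
      ((∑ i : Fin (n + n'),
          (Fin.append (fun i => ((a i : ℤ) : ZMod q) + k₁ i) p₁ i
            + Fin.append (fun i => ((b i : ℤ) : ZMod q) + k₂ i) p₂ i))
        - (∑ i : Fin (n + n'),
            Fin.append (fun i => ((a i + b i - 2 * a i * b i : ℤ) : ZMod q) + k i) pm i)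
        - ((∑ i, k₁ i) + ∑ j, (p₁ j - pm j))
        - ((∑ i, (k₂ i - k i)) + ∑ j, p₂ j))
      = (((∑ i, a i * b i : ℤ)) : ZMod q) :=
  bimpc_correct_padded_general n n' q hq hlt a b k₁ k₂ k p₁ p₂ pm
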